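/- (Haar-averaged FH variance) Let d ≥ 1, let H₁, …, H_n be nonzero d×d Hermitian matrices, set γ_j = (Tr[H_j²]/d)^{1/2} and ‖γ‖₁ = Σ_j γ_j. If φ₀ and φ_k are independent Haar-random pure states on ℂ^d, then E[ Σ_{j=1}^n (2‖γ‖₁/γ_j) ( ⟨φ₀, H_j² φ₀⟩ + ⟨φ_k, H_j² φ_k⟩ − |⟨φ₀, H_j φ_k⟩|² ) ] = 2‖γ‖₁² (2 − 1/d). -/

import Mathlib

open MeasureTheory
open scoped ComplexInnerProductSpace Matrix

variable {d : ℕ} [MeasurableSpace (EuclideanSpace ℂ (Fin d))]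
  [BorelSpace (EuclideanSpace ℂ (Fin d))]

local notation "V" => EuclideanSpace ℂ (Fin d)

lemma ae_sphere (μ : Measure V) [IsProbabilityMeasure μ]
    (hsph : μ (Metric.sphere (0 : V) 1) = 1) : ∀ᵐ x ∂μ, ‖x‖ = 1 := by
  have h : μ (Metric.sphere (0 : V) 1)ᶜ = 0 := by
    rw [measure_compl (Metric.isClosed_sphere).measurableSet (measure_ne_top _ _), hsph, measure_univ]
    simp
  filter_upwards [measure_eq_zero_iff_ae_notMem.mp h] with x hx
  have := not_not.mp hx
  simpa [Metric.mem_sphere, dist_zero_right] using this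

lemma apply_norm_le (x : V) (i : Fin d) : ‖x i‖ ≤ ‖x‖ := by
  have h1 : ‖x i‖ ^ 2 ≤ ∑ k, ‖x k‖ ^ 2 :=
    Finset.single_le_sum (fun k _ => sq_nonneg ‖x k‖) (Finset.mem_univ i)
  have h2 : ‖x‖ = Real.sqrt (∑ k, ‖x k‖ ^ 2) := EuclideanSpace.norm_eq x
  rw [h2]
  exact (Real.le_sqrt (norm_nonneg _) (Finset.sum_nonneg fun k _ => sq_nonneg _)).mpr h1

lemma integrable_sphere_bound (μ : Measure V) [IsProbabilityMeasure μ]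
    (hsph : μ (Metric.sphere (0 : V) 1) = 1) {E : Type*} [NormedAddCommGroup E]
    (f : V → E) (hf : Continuous f) (C : ℝ)
    (hb : ∀ x : V, ‖x‖ = 1 → ‖f x‖ ≤ C) : Integrable f μ := by
  refine (integrable_const C).mono' hf.aestronglyMeasurable ?_
  filter_upwards [ae_sphere μ hsph] with x hx
  simpa using hb x hx

lemma integrable_mom (μ : Measure V) [IsProbabilityMeasure μ]
    (hsph : μ (Metric.sphere (0 : V) 1) = 1) (i j : Fin d) :
    Integrable (fun x : V => (starRingEnd ℂ) (x i) * x j) μ := by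
  refine integrable_sphere_bound μ hsph _ ?_ 1 ?_
  · exact (continuous_star.comp (EuclideanSpace.proj i).continuous).mul
      (EuclideanSpace.proj j).continuous
  · intro x hx
    rw [norm_mul, RCLike.norm_conj]
    calc ‖x i‖ * ‖x j‖ ≤ ‖x‖ * ‖x‖ :=
          mul_le_mul (apply_norm_le x i) (apply_norm_le x j) (norm_nonneg _) (norm_nonneg _)
      _ = 1 := by rw [hx]; ring

lemma integral_comp_iso (μ : Measure V)
    (hinv : ∀ W : V ≃ₗᵢ[ℂ] V, Measure.map ⇑W μ = μ)
    {E : Type*} [NormedAddCommGroup E] [NormedSpace ℝ E]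
    (f : V → E) (hfm : AEStronglyMeasurable f μ) (W : V ≃ₗᵢ[ℂ] V) :
    ∫ x, f x ∂μ = ∫ x, f (W x) ∂μ := by
  have hfm' : AEStronglyMeasurable f (Measure.map ⇑W μ) := by
    rw [hinv W]; exact hfm
  conv_lhs => rw [← hinv W]
  exact integral_map W.continuous.aemeasurable hfm'

lemma integrable_normsq (μ : Measure V) [IsProbabilityMeasure μ]
    (hsph : μ (Metric.sphere (0 : V) 1) = 1) (i : Fin d) :
    Integrable (fun x : V => ‖x i‖ ^ 2) μ := by
  refine integrable_sphere_bound μ hsph _ ?_ 1 ?_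
  · exact ((EuclideanSpace.proj i).continuous.norm).pow 2
  · intro x hx
    have := apply_norm_le x i
    rw [hx] at this
    have h0 : (0:ℝ) ≤ ‖x i‖ := norm_nonneg _
    rw [Real.norm_eq_abs, abs_of_nonneg (by positivity)]
    nlinarith

lemma mom_diag (μ : Measure V) [IsProbabilityMeasure μ]
    (hsph : μ (Metric.sphere (0 : V) 1) = 1)
    (hinv : ∀ W : V ≃ₗᵢ[ℂ] V, Measure.map ⇑W μ = μ) (i : Fin d) :
    ∫ x, ‖x i‖ ^ 2 ∂μ = 1 / d := by
  have heq : ∀ k : Fin d, ∫ x, ‖x k‖ ^ 2 ∂μ = ∫ x, ‖x i‖ ^ 2 ∂μ := by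
    intro k
    have W := LinearIsometryEquiv.piLpCongrLeft 2 ℂ ℂ (Equiv.swap k i)
    have hcomp := integral_comp_iso μ hinv (fun x : V => ‖x k‖ ^ 2)
      (integrable_normsq μ hsph k).aestronglyMeasurable
      (LinearIsometryEquiv.piLpCongrLeft 2 ℂ ℂ (Equiv.swap k i))
    rw [hcomp]
    congr 1
    ext x
    rw [LinearIsometryEquiv.piLpCongrLeft_apply]
    congr 2
    show x ((Equiv.swap k i).symm k) = x i
    simp only [Equiv.symm_swap]
    exact congrArg x (Equiv.swap_apply_left k i)
  have hsum : ∑ k : Fin d, ∫ x, ‖x k‖ ^ 2 ∂μ = 1 := by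
    rw [← integral_finset_sum _ (fun k _ => integrable_normsq μ hsph k)]
    have : ∀ᵐ x ∂μ, (∑ k : Fin d, ‖x k‖ ^ 2) = 1 := by
      filter_upwards [ae_sphere μ hsph] with x hx
      have := EuclideanSpace.norm_eq x
      rw [hx] at this
      have h2 : (1:ℝ) = Real.sqrt (∑ k, ‖x k‖ ^ 2) := this
      have h3 : ∑ k, ‖x k‖ ^ 2 = 1 := by
        have := congrArg (fun t => t ^ 2) h2
        simpa [Real.sq_sqrt (Finset.sum_nonneg fun k _ => sq_nonneg _)] using this.symm
      exact h3
    rw [integral_congr_ae this]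
    simp
  rw [Finset.sum_congr rfl (fun k _ => heq k)] at hsum
  rw [Finset.sum_const, Finset.card_univ, Fintype.card_fin, nsmul_eq_mul] at hsum
  have hd : (0:ℝ) < d := by exact_mod_cast i.pos
  rw [eq_div_iff hd.ne']
  linarith [hsum]

lemma moment (μ : Measure V) [IsProbabilityMeasure μ]
    (hsph : μ (Metric.sphere (0 : V) 1) = 1)
    (hinv : ∀ W : V ≃ₗᵢ[ℂ] V, Measure.map ⇑W μ = μ) (i j : Fin d) :
    ∫ x, (starRingEnd ℂ) (x i) * x j ∂μ = if i = j then ((d:ℂ))⁻¹ else 0 := by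
  rcases eq_or_ne i j with rfl | hij
  · simp only [if_pos rfl]
    have h1 : (fun x : V => (starRingEnd ℂ) (x i) * x i)
        = fun x : V => ((‖x i‖ ^ 2 : ℝ) : ℂ) := by
      funext x
      rw [mul_comm, Complex.mul_conj]
      norm_cast
      rw [Complex.normSq_eq_norm_sq]
    have h2 := integral_ofReal (𝕜 := ℂ) (f := fun x : V => ‖x i‖ ^ 2) (μ := μ)
    rw [h1]
    rw [show (fun x : V => ((‖x i‖ ^ 2 : ℝ) : ℂ)) = fun x : V => (RCLike.ofReal (K := ℂ) (‖x i‖ ^ 2)) from rfl, h2, mom_diag μ hsph hinv i]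
    norm_num
  · rw [if_neg hij]
    set W : V ≃ₗᵢ[ℂ] V := LinearIsometryEquiv.piLpCongrRight 2
      (fun l : Fin d => if l = i then LinearIsometryEquiv.neg ℂ (E := ℂ)
        else LinearIsometryEquiv.refl ℂ ℂ) with hW
    have hWx : ∀ (x : V) (l : Fin d), W x l = if l = i then -(x l) else x l := by
      intro x l
      rw [hW, LinearIsometryEquiv.piLpCongrRight_apply]
      show (if l = i then LinearIsometryEquiv.neg ℂ (E := ℂ)
        else LinearIsometryEquiv.refl ℂ ℂ) (x l) = _
      split <;> rfl
    have hcomp := integral_comp_iso μ hinv (fun x : V => (starRingEnd ℂ) (x i) * x j)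
      (integrable_mom μ hsph i j).aestronglyMeasurable W
    have hneg : ∀ x : V, (starRingEnd ℂ) (W x i) * W x j
        = -((starRingEnd ℂ) (x i) * x j) := by
      intro x
      rw [hWx x i, hWx x j, if_pos rfl, if_neg hij.symm]
      simp
    rw [show (fun x : V => (starRingEnd ℂ) (W x i) * (W x j))
        = fun x : V => -((starRingEnd ℂ) (x i) * x j) from funext hneg] at hcomp
    rw [integral_neg] at hcomp
    have : (2:ℂ) * ∫ x, (starRingEnd ℂ) (x i) * x j ∂μ = 0 := by
      rw [two_mul]
      nth_rewrite 1 [hcomp]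
      ring
    simpa using this

lemma inner_toEuclideanLin (A : Matrix (Fin d) (Fin d) ℂ) (x y : V) :
    ⟪x, Matrix.toEuclideanLin A y⟫
      = ∑ i, ∑ j, A i j * ((starRingEnd ℂ) (x i) * y j) := by
  simp only [PiLp.inner_apply, RCLike.inner_apply]
  have hA : ∀ i, (Matrix.toEuclideanLin A y) i = ∑ j, A i j * y j := by
    intro i
    rw [Matrix.toEuclideanLin_apply]
    simp [Matrix.mulVec, dotProduct]
  refine Finset.sum_congr rfl fun i _ => ?_
  rw [hA, Finset.sum_mul]
  refine Finset.sum_congr rfl fun j _ => ?_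
  ring

lemma integrable_innerA (μ : Measure V) [IsProbabilityMeasure μ]
    (hsph : μ (Metric.sphere (0 : V) 1) = 1) (A : Matrix (Fin d) (Fin d) ℂ) :
    Integrable (fun x : V => ⟪x, Matrix.toEuclideanLin A x⟫) μ := by
  simp_rw [inner_toEuclideanLin]
  exact integrable_finset_sum _ fun i _ => integrable_finset_sum _ fun j _ =>
    (integrable_mom μ hsph i j).const_mul _

lemma quadC (μ : Measure V) [IsProbabilityMeasure μ]
    (hsph : μ (Metric.sphere (0 : V) 1) = 1)
    (hinv : ∀ W : V ≃ₗᵢ[ℂ] V, Measure.map ⇑W μ = μ) (A : Matrix (Fin d) (Fin d) ℂ) :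
    ∫ x, ⟪x, Matrix.toEuclideanLin A x⟫ ∂μ = A.trace / d := by
  simp_rw [inner_toEuclideanLin]
  rw [integral_finset_sum _ (fun i _ => integrable_finset_sum _ fun j _ =>
    (integrable_mom μ hsph i j).const_mul (A i j))]
  have : ∀ i : Fin d, ∫ x, (∑ j, A i j * ((starRingEnd ℂ) (x i) * x j)) ∂μ
      = A i i * ((d:ℂ))⁻¹ := by
    intro i
    rw [integral_finset_sum _ (fun j _ => (integrable_mom μ hsph i j).const_mul _)]
    have h1 : ∀ j : Fin d, ∫ x, A i j * ((starRingEnd ℂ) (x i) * x j) ∂μ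
        = A i j * (if i = j then ((d:ℂ))⁻¹ else 0) := by
      intro j
      rw [integral_const_mul, moment μ hsph hinv i j]
    simp_rw [h1]
    simp [mul_ite]
  simp_rw [this]
  rw [← Finset.sum_mul, Matrix.trace]
  simp [Matrix.diag, div_eq_mul_inv]

lemma quadRe (μ : Measure V) [IsProbabilityMeasure μ]
    (hsph : μ (Metric.sphere (0 : V) 1) = 1)
    (hinv : ∀ W : V ≃ₗᵢ[ℂ] V, Measure.map ⇑W μ = μ) (A : Matrix (Fin d) (Fin d) ℂ) :
    ∫ x, (⟪x, Matrix.toEuclideanLin A x⟫).re ∂μ = (A.trace).re / d := by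
  have h := integral_re (integrable_innerA μ hsph A)
  rw [quadC μ hsph hinv A] at h
  have h2 : (A.trace / (d:ℂ)).re = A.trace.re / d := by
    rw [show ((d:ℂ)) = ((d:ℝ):ℂ) by norm_cast, Complex.div_ofReal_re]
  rw [← h2]
  exact h

noncomputable def Pmat (v : EuclideanSpace ℂ (Fin d)) : Matrix (Fin d) (Fin d) ℂ :=
  Matrix.vecMulVec (fun i => v i) (fun j => (starRingEnd ℂ) (v j))

lemma cross_pointwise (v y : V) :
    ((‖⟪v, y⟫‖ ^ 2 : ℝ) : ℂ) = ⟪y, Matrix.toEuclideanLin (Pmat v) y⟫ := by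
  have ha : ⟪v, y⟫ = ∑ i, (starRingEnd ℂ) (v i) * y i := by
    simp [PiLp.inner_apply, RCLike.inner_apply, mul_comm]
  have h0 : ((‖⟪v, y⟫‖ ^ 2 : ℝ) : ℂ) = ⟪v, y⟫ * (starRingEnd ℂ) ⟪v, y⟫ := by
    rw [Complex.mul_conj]
    norm_cast
    rw [Complex.normSq_eq_norm_sq]
  rw [h0, inner_toEuclideanLin, ha, map_sum, Finset.sum_mul_sum]
  rw [Finset.sum_comm]
  refine Finset.sum_congr rfl fun i _ => Finset.sum_congr rfl fun j _ => ?_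
  simp only [Pmat, Matrix.vecMulVec_apply, map_mul, RingHom.id_apply,
    RCLike.star_def, starRingEnd_self_apply]
  ring

lemma trace_Pmat (v : V) : ((Pmat v).trace).re = ‖v‖ ^ 2 := by
  have : (Pmat v).trace = ∑ i, ((‖v i‖ ^ 2 : ℝ) : ℂ) := by
    rw [Matrix.trace]
    refine Finset.sum_congr rfl fun i _ => ?_
    simp only [Matrix.diag_apply, Pmat, Matrix.vecMulVec_apply]
    rw [Complex.mul_conj]
    norm_cast
    rw [Complex.normSq_eq_norm_sq]
  rw [this]
  rw [← Complex.ofReal_sum]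
  rw [Complex.ofReal_re]
  have := EuclideanSpace.norm_eq v
  rw [this, Real.sq_sqrt (Finset.sum_nonneg fun k _ => sq_nonneg _)]

lemma cross_inner (μ : Measure V) [IsProbabilityMeasure μ]
    (hsph : μ (Metric.sphere (0 : V) 1) = 1)
    (hinv : ∀ W : V ≃ₗᵢ[ℂ] V, Measure.map ⇑W μ = μ) (v : V) :
    ∫ y, ‖⟪v, y⟫‖ ^ 2 ∂μ = ‖v‖ ^ 2 / d := by
  have h1 : ∀ y : V, ‖⟪v, y⟫‖ ^ 2 = (⟪y, Matrix.toEuclideanLin (Pmat v) y⟫).re := by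
    intro y
    rw [← cross_pointwise v y, Complex.ofReal_re]
  simp_rw [h1]
  rw [quadRe μ hsph hinv (Pmat v), trace_Pmat v]

lemma ae_sphere_prod (μ₀ μk : Measure V) [IsProbabilityMeasure μ₀] [IsProbabilityMeasure μk]
    (hsph₀ : μ₀ (Metric.sphere (0 : V) 1) = 1) (hsphk : μk (Metric.sphere (0 : V) 1) = 1) :
    ∀ᵐ p ∂(μ₀.prod μk), ‖p.1‖ = 1 ∧ ‖p.2‖ = 1 := by
  set S := (Metric.sphere (0:V) 1) ×ˢ (Metric.sphere (0:V) 1) with hS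
  have hm : MeasurableSet S :=
    (Metric.isClosed_sphere.measurableSet).prod (Metric.isClosed_sphere.measurableSet)
  have h1 : (μ₀.prod μk) S = 1 := by rw [hS, Measure.prod_prod, hsph₀, hsphk, mul_one]
  have h0 : (μ₀.prod μk) Sᶜ = 0 := by
    rw [measure_compl hm (measure_ne_top _ _), h1, measure_univ]; simp
  filter_upwards [measure_eq_zero_iff_ae_notMem.mp h0] with p hp
  have hpS := not_not.mp hp
  rw [hS, Set.mem_prod] at hpS
  refine ⟨?_, ?_⟩
  · simpa [dist_zero_right] using hpS.1
  · simpa [dist_zero_right] using hpS.2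

lemma integrable_sphere_bound_prod (μ₀ μk : Measure V)
    [IsProbabilityMeasure μ₀] [IsProbabilityMeasure μk]
    (hsph₀ : μ₀ (Metric.sphere (0 : V) 1) = 1) (hsphk : μk (Metric.sphere (0 : V) 1) = 1)
    {E : Type*} [NormedAddCommGroup E]
    (f : V × V → E) (hf : Continuous f) (C : ℝ)
    (hb : ∀ p : V × V, ‖p.1‖ = 1 → ‖p.2‖ = 1 → ‖f p‖ ≤ C) :
    Integrable f (μ₀.prod μk) := by
  refine (integrable_const C).mono' hf.aestronglyMeasurable ?_
  filter_upwards [ae_sphere_prod μ₀ μk hsph₀ hsphk] with p hp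
  simpa using hb p hp.1 hp.2

lemma euclid_mul (A B : Matrix (Fin d) (Fin d) ℂ) (x : V) :
    Matrix.toEuclideanLin (A * B) x
      = Matrix.toEuclideanLin A (Matrix.toEuclideanLin B x) := by
  rw [Matrix.toEuclideanLin_apply, Matrix.toEuclideanLin_apply, Matrix.toEuclideanLin_apply]
  rw [WithLp.ofLp_toLp, Matrix.mulVec_mulVec]

lemma adj_inner (A : Matrix (Fin d) (Fin d) ℂ) (x y : V) :
    ⟪x, Matrix.toEuclideanLin A y⟫ = ⟪Matrix.toEuclideanLin Aᴴ x, y⟫ := by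
  rw [Matrix.toEuclideanLin_conjTranspose_eq_adjoint]
  rw [LinearMap.adjoint_inner_left]

lemma crossInt (μ₀ μk : Measure V) [IsProbabilityMeasure μ₀] [IsProbabilityMeasure μk]
    (hsph₀ : μ₀ (Metric.sphere (0 : V) 1) = 1)
    (hinv₀ : ∀ W : V ≃ₗᵢ[ℂ] V, Measure.map ⇑W μ₀ = μ₀)
    (hsphk : μk (Metric.sphere (0 : V) 1) = 1)
    (hinvk : ∀ W : V ≃ₗᵢ[ℂ] V, Measure.map ⇑W μk = μk)
    (A : Matrix (Fin d) (Fin d) ℂ) :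
    ∫ p : V × V, ‖⟪p.1, Matrix.toEuclideanLin A p.2⟫‖ ^ 2 ∂(μ₀.prod μk)
      = ((A * Aᴴ).trace).re / d / d := by
  set L := LinearMap.toContinuousLinearMap (Matrix.toEuclideanLin A) with hL
  have hLcoe : ∀ y : V, L y = Matrix.toEuclideanLin A y := fun y => rfl
  have hint : Integrable (fun p : V × V => ‖⟪p.1, Matrix.toEuclideanLin A p.2⟫‖ ^ 2)
      (μ₀.prod μk) := by
    refine integrable_sphere_bound_prod μ₀ μk hsph₀ hsphk _ ?_ (‖L‖ ^ 2) ?_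
    · have hcont : Continuous fun p : V × V => (⟪p.1, L p.2⟫ : ℂ) :=
        continuous_inner.comp ((continuous_fst).prodMk (L.continuous.comp continuous_snd))
      exact hcont.norm.pow 2
    · intro p h1 h2
      have hb : ‖(⟪p.1, Matrix.toEuclideanLin A p.2⟫ : ℂ)‖ ≤ ‖L‖ := by
        calc ‖(⟪p.1, Matrix.toEuclideanLin A p.2⟫ : ℂ)‖
            ≤ ‖p.1‖ * ‖Matrix.toEuclideanLin A p.2‖ := norm_inner_le_norm _ _
          _ = ‖L p.2‖ := by rw [h1, one_mul, hLcoe]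
          _ ≤ ‖L‖ * ‖p.2‖ := L.le_opNorm _
          _ = ‖L‖ := by rw [h2, mul_one]
      have h0 : (0:ℝ) ≤ ‖(⟪p.1, Matrix.toEuclideanLin A p.2⟫ : ℂ)‖ := norm_nonneg _
      rw [Real.norm_eq_abs, abs_of_nonneg (by positivity)]
      nlinarith [norm_nonneg L]
  rw [MeasureTheory.integral_prod _ hint]
  have hadj : ∀ (x y : V), ⟪x, Matrix.toEuclideanLin A y⟫
      = ⟪Matrix.toEuclideanLin Aᴴ x, y⟫ := adj_inner A
  simp_rw [hadj]
  have hin : ∀ x : V, ∫ y, ‖⟪Matrix.toEuclideanLin Aᴴ x, y⟫‖ ^ 2 ∂μk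
      = ‖Matrix.toEuclideanLin Aᴴ x‖ ^ 2 / d :=
    fun x => cross_inner μk hsphk hinvk _
  simp_rw [hin]
  have hnorm : ∀ x : V, ‖Matrix.toEuclideanLin Aᴴ x‖ ^ 2
      = (⟪x, Matrix.toEuclideanLin (A * Aᴴ) x⟫).re := by
    intro x
    rw [euclid_mul]
    rw [show ⟪x, Matrix.toEuclideanLin A (Matrix.toEuclideanLin Aᴴ x)⟫
        = ⟪Matrix.toEuclideanLin Aᴴ x, Matrix.toEuclideanLin Aᴴ x⟫ from hadj _ _]
    exact (inner_self_eq_norm_sq (𝕜 := ℂ) _).symm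
  simp_rw [div_eq_mul_inv, hnorm]
  rw [MeasureTheory.integral_mul_const]
  rw [quadRe μ₀ hsph₀ hinv₀]
  ring

lemma trace_self_conj (A : Matrix (Fin d) (Fin d) ℂ) :
    ((A * Aᴴ).trace).re = ∑ i, ∑ j, ‖A i j‖ ^ 2 := by
  have h : (A * Aᴴ).trace = ∑ i, ∑ j, ((‖A i j‖ ^ 2 : ℝ) : ℂ) := by
    rw [Matrix.trace]
    refine Finset.sum_congr rfl fun i _ => ?_
    rw [Matrix.diag_apply, Matrix.mul_apply]
    refine Finset.sum_congr rfl fun j _ => ?_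
    rw [Matrix.conjTranspose_apply, RCLike.star_def, Complex.mul_conj]
    norm_cast
    rw [Complex.normSq_eq_norm_sq]
  rw [h]
  have h2 : (∑ i, ∑ j, ((‖A i j‖ ^ 2 : ℝ) : ℂ)) = (((∑ i, ∑ j, ‖A i j‖ ^ 2 : ℝ)) : ℂ) := by
    push_cast; rfl
  rw [h2, Complex.ofReal_re]

lemma trace_sq_pos (A : Matrix (Fin d) (Fin d) ℂ) (hherm : Aᴴ = A) (hne : A ≠ 0) :
    0 < ((A * A).trace).re := by
  rw [show A * A = A * Aᴴ by rw [hherm]]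
  rw [trace_self_conj]
  obtain ⟨i, l, hil⟩ : ∃ i l, A i l ≠ 0 := by
    by_contra h
    push_neg at h
    exact hne (Matrix.ext fun i l => h i l)
  refine Finset.sum_pos' (fun i _ => Finset.sum_nonneg fun j _ => sq_nonneg _) ?_
  refine ⟨i, Finset.mem_univ i, ?_⟩
  refine Finset.sum_pos' (fun j _ => sq_nonneg _) ⟨l, Finset.mem_univ l, ?_⟩
  exact pow_pos (norm_pos_iff.mpr hil) 2

lemma integrable_quadRe_fst (μ₀ μk : Measure V)
    [IsProbabilityMeasure μ₀] [IsProbabilityMeasure μk]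
    (hsph₀ : μ₀ (Metric.sphere (0 : V) 1) = 1) (hsphk : μk (Metric.sphere (0 : V) 1) = 1)
    (A : Matrix (Fin d) (Fin d) ℂ) :
    Integrable (fun p : V × V => (⟪p.1, Matrix.toEuclideanLin A p.1⟫).re) (μ₀.prod μk) := by
  set L := LinearMap.toContinuousLinearMap (Matrix.toEuclideanLin A) with hL
  have hLcoe : ∀ y : V, L y = Matrix.toEuclideanLin A y := fun y => rfl
  refine integrable_sphere_bound_prod μ₀ μk hsph₀ hsphk _ ?_ ‖L‖ ?_
  · have hcont : Continuous fun p : V × V => (⟪p.1, L p.1⟫ : ℂ) :=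
      continuous_inner.comp ((continuous_fst).prodMk (L.continuous.comp continuous_fst))
    exact (Complex.continuous_re).comp hcont
  · intro p h1 _
    have hb : ‖(⟪p.1, Matrix.toEuclideanLin A p.1⟫ : ℂ)‖ ≤ ‖L‖ := by
      calc ‖(⟪p.1, Matrix.toEuclideanLin A p.1⟫ : ℂ)‖
          ≤ ‖p.1‖ * ‖Matrix.toEuclideanLin A p.1‖ := norm_inner_le_norm _ _
        _ = ‖L p.1‖ := by rw [h1, one_mul, hLcoe]
        _ ≤ ‖L‖ * ‖p.1‖ := L.le_opNorm _
        _ = ‖L‖ := by rw [h1, mul_one]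
    calc ‖(⟪p.1, Matrix.toEuclideanLin A p.1⟫ : ℂ).re‖
        ≤ ‖(⟪p.1, Matrix.toEuclideanLin A p.1⟫ : ℂ)‖ := Complex.abs_re_le_norm _
      _ ≤ ‖L‖ := hb

lemma integrable_quadRe_snd (μ₀ μk : Measure V)
    [IsProbabilityMeasure μ₀] [IsProbabilityMeasure μk]
    (hsph₀ : μ₀ (Metric.sphere (0 : V) 1) = 1) (hsphk : μk (Metric.sphere (0 : V) 1) = 1)
    (A : Matrix (Fin d) (Fin d) ℂ) :
    Integrable (fun p : V × V => (⟪p.2, Matrix.toEuclideanLin A p.2⟫).re) (μ₀.prod μk) := by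
  set L := LinearMap.toContinuousLinearMap (Matrix.toEuclideanLin A) with hL
  have hLcoe : ∀ y : V, L y = Matrix.toEuclideanLin A y := fun y => rfl
  refine integrable_sphere_bound_prod μ₀ μk hsph₀ hsphk _ ?_ ‖L‖ ?_
  · have hcont : Continuous fun p : V × V => (⟪p.2, L p.2⟫ : ℂ) :=
      continuous_inner.comp ((continuous_snd).prodMk (L.continuous.comp continuous_snd))
    exact (Complex.continuous_re).comp hcont
  · intro p _ h2
    have hb : ‖(⟪p.2, Matrix.toEuclideanLin A p.2⟫ : ℂ)‖ ≤ ‖L‖ := by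
      calc ‖(⟪p.2, Matrix.toEuclideanLin A p.2⟫ : ℂ)‖
          ≤ ‖p.2‖ * ‖Matrix.toEuclideanLin A p.2‖ := norm_inner_le_norm _ _
        _ = ‖L p.2‖ := by rw [h2, one_mul, hLcoe]
        _ ≤ ‖L‖ * ‖p.2‖ := L.le_opNorm _
        _ = ‖L‖ := by rw [h2, mul_one]
    calc ‖(⟪p.2, Matrix.toEuclideanLin A p.2⟫ : ℂ).re‖
        ≤ ‖(⟪p.2, Matrix.toEuclideanLin A p.2⟫ : ℂ)‖ := Complex.abs_re_le_norm _
      _ ≤ ‖L‖ := hb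

lemma integrable_cross_prod (μ₀ μk : Measure V)
    [IsProbabilityMeasure μ₀] [IsProbabilityMeasure μk]
    (hsph₀ : μ₀ (Metric.sphere (0 : V) 1) = 1) (hsphk : μk (Metric.sphere (0 : V) 1) = 1)
    (A : Matrix (Fin d) (Fin d) ℂ) :
    Integrable (fun p : V × V => ‖⟪p.1, Matrix.toEuclideanLin A p.2⟫‖ ^ 2) (μ₀.prod μk) := by
  set L := LinearMap.toContinuousLinearMap (Matrix.toEuclideanLin A) with hL
  have hLcoe : ∀ y : V, L y = Matrix.toEuclideanLin A y := fun y => rfl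
  refine integrable_sphere_bound_prod μ₀ μk hsph₀ hsphk _ ?_ (‖L‖ ^ 2) ?_
  · have hcont : Continuous fun p : V × V => (⟪p.1, L p.2⟫ : ℂ) :=
      continuous_inner.comp ((continuous_fst).prodMk (L.continuous.comp continuous_snd))
    exact hcont.norm.pow 2
  · intro p h1 h2
    have hb : ‖(⟪p.1, Matrix.toEuclideanLin A p.2⟫ : ℂ)‖ ≤ ‖L‖ := by
      calc ‖(⟪p.1, Matrix.toEuclideanLin A p.2⟫ : ℂ)‖
          ≤ ‖p.1‖ * ‖Matrix.toEuclideanLin A p.2‖ := norm_inner_le_norm _ _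
        _ = ‖L p.2‖ := by rw [h1, one_mul, hLcoe]
        _ ≤ ‖L‖ * ‖p.2‖ := L.le_opNorm _
        _ = ‖L‖ := by rw [h2, mul_one]
    have h0 : (0:ℝ) ≤ ‖(⟪p.1, Matrix.toEuclideanLin A p.2⟫ : ℂ)‖ := norm_nonneg _
    rw [Real.norm_eq_abs, abs_of_nonneg (by positivity)]
    nlinarith [norm_nonneg L]

lemma quadRe_fst (μ₀ μk : Measure V)
    [IsProbabilityMeasure μ₀] [IsProbabilityMeasure μk]
    (hsph₀ : μ₀ (Metric.sphere (0 : V) 1) = 1)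
    (hinv₀ : ∀ W : V ≃ₗᵢ[ℂ] V, Measure.map ⇑W μ₀ = μ₀)
    (A : Matrix (Fin d) (Fin d) ℂ) :
    ∫ p : V × V, (⟪p.1, Matrix.toEuclideanLin A p.1⟫).re ∂(μ₀.prod μk)
      = (A.trace).re / d := by
  have h := integral_prod_mul (μ := μ₀) (ν := μk)
    (f := fun x : V => (⟪x, Matrix.toEuclideanLin A x⟫).re) (g := fun _ : V => (1:ℝ))
  simp only [mul_one, integral_const, measure_univ, ENNReal.toReal_one, probReal_univ, smul_eq_mul,
    one_mul] at h
  rw [h, quadRe μ₀ hsph₀ hinv₀]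

lemma quadRe_snd (μ₀ μk : Measure V)
    [IsProbabilityMeasure μ₀] [IsProbabilityMeasure μk]
    (hsphk : μk (Metric.sphere (0 : V) 1) = 1)
    (hinvk : ∀ W : V ≃ₗᵢ[ℂ] V, Measure.map ⇑W μk = μk)
    (A : Matrix (Fin d) (Fin d) ℂ) :
    ∫ p : V × V, (⟪p.2, Matrix.toEuclideanLin A p.2⟫).re ∂(μ₀.prod μk)
      = (A.trace).re / d := by
  have h := integral_prod_mul (μ := μ₀) (ν := μk)
    (f := fun _ : V => (1:ℝ)) (g := fun y : V => (⟪y, Matrix.toEuclideanLin A y⟫).re)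
  simp only [one_mul, integral_const, measure_univ, ENNReal.toReal_one, probReal_univ, smul_eq_mul] at h
  rw [h, quadRe μk hsphk hinvk]

/-- Haar-averaged FH variance: for nonzero Hermitian fragments `H_j` with
`γ_j = (Tr[H_j²]/d)^{1/2}` and independent Haar-random pure states `φ₀, φₖ`,
`E[∑_j (2‖γ‖₁/γ_j)(⟨φ₀,H_j²φ₀⟩ + ⟨φₖ,H_j²φₖ⟩ − |⟨φ₀,H_jφₖ⟩|²)] = 2‖γ‖₁²(2 − 1/d)`. -/
theorem stmt_18 (d n : ℕ) (hd : 1 ≤ d)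
    [MeasurableSpace (EuclideanSpace ℂ (Fin d))]
    [BorelSpace (EuclideanSpace ℂ (Fin d))]
    (μ₀ μk : Measure (EuclideanSpace ℂ (Fin d)))
    [IsProbabilityMeasure μ₀] [IsProbabilityMeasure μk]
    (hsph₀ : μ₀ (Metric.sphere (0 : EuclideanSpace ℂ (Fin d)) 1) = 1)
    (hinv₀ : ∀ W : EuclideanSpace ℂ (Fin d) ≃ₗᵢ[ℂ] EuclideanSpace ℂ (Fin d),
      Measure.map ⇑W μ₀ = μ₀)
    (hsphk : μk (Metric.sphere (0 : EuclideanSpace ℂ (Fin d)) 1) = 1)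
    (hinvk : ∀ W : EuclideanSpace ℂ (Fin d) ≃ₗᵢ[ℂ] EuclideanSpace ℂ (Fin d),
      Measure.map ⇑W μk = μk)
    (H : Fin n → Matrix (Fin d) (Fin d) ℂ)
    (hherm : ∀ j, (H j)ᴴ = H j) (hne : ∀ j, H j ≠ 0)
    (γ : Fin n → ℝ)
    (hγ : ∀ j, γ j = Real.sqrt ((Matrix.trace (H j * H j)).re / d)) :
    (∫ p : EuclideanSpace ℂ (Fin d) × EuclideanSpace ℂ (Fin d),
        (∑ j, (2 * (∑ i, γ i) / γ j) *
          ((⟪p.1, Matrix.toEuclideanLin (H j * H j) p.1⟫).re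
            + (⟪p.2, Matrix.toEuclideanLin (H j * H j) p.2⟫).re
            - ‖⟪p.1, Matrix.toEuclideanLin (H j) p.2⟫‖ ^ 2)) ∂(μ₀.prod μk))
      = 2 * (∑ i, γ i) ^ 2 * (2 - 1 / (d : ℝ)) := by
  have hd0 : (0:ℝ) < d := by exact_mod_cast hd
  have hint : ∀ j : Fin n, Integrable (fun p :
      EuclideanSpace ℂ (Fin d) × EuclideanSpace ℂ (Fin d) =>
        (2 * (∑ i, γ i) / γ j) *
          ((⟪p.1, Matrix.toEuclideanLin (H j * H j) p.1⟫).re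
            + (⟪p.2, Matrix.toEuclideanLin (H j * H j) p.2⟫).re
            - ‖⟪p.1, Matrix.toEuclideanLin (H j) p.2⟫‖ ^ 2)) (μ₀.prod μk) := by
    intro j
    exact (((integrable_quadRe_fst μ₀ μk hsph₀ hsphk (H j * H j)).add
      (integrable_quadRe_snd μ₀ μk hsph₀ hsphk (H j * H j))).sub
      (integrable_cross_prod μ₀ μk hsph₀ hsphk (H j))).const_mul _
  rw [integral_finset_sum _ (fun j _ => hint j)]
  have hval : ∀ j : Fin n, (∫ p :
      EuclideanSpace ℂ (Fin d) × EuclideanSpace ℂ (Fin d),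
        (2 * (∑ i, γ i) / γ j) *
          ((⟪p.1, Matrix.toEuclideanLin (H j * H j) p.1⟫).re
            + (⟪p.2, Matrix.toEuclideanLin (H j * H j) p.2⟫).re
            - ‖⟪p.1, Matrix.toEuclideanLin (H j) p.2⟫‖ ^ 2) ∂(μ₀.prod μk))
      = (2 * (∑ i, γ i) * (2 - 1 / (d:ℝ))) * γ j := by
    intro j
    rw [integral_const_mul]
    have h3 := integrable_quadRe_fst μ₀ μk hsph₀ hsphk (H j * H j)
    have h4 := integrable_quadRe_snd μ₀ μk hsph₀ hsphk (H j * H j)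
    have h5 := integrable_cross_prod μ₀ μk hsph₀ hsphk (H j)
    have h34 : Integrable (fun p : EuclideanSpace ℂ (Fin d) × EuclideanSpace ℂ (Fin d) =>
        (⟪p.1, Matrix.toEuclideanLin (H j * H j) p.1⟫).re
          + (⟪p.2, Matrix.toEuclideanLin (H j * H j) p.2⟫).re) (μ₀.prod μk) := h3.add h4
    rw [integral_sub h34 h5, integral_add h3 h4]
    rw [quadRe_fst μ₀ μk hsph₀ hinv₀ (H j * H j), quadRe_snd μ₀ μk hsphk hinvk (H j * H j)]
    have hc := crossInt μ₀ μk hsph₀ hinv₀ hsphk hinvk (H j)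
    rw [hherm j] at hc
    rw [hc]
    have hTpos : 0 < ((H j * H j).trace).re := trace_sq_pos (H j) (hherm j) (hne j)
    have hγpos : 0 < γ j := by
      rw [hγ j]; exact Real.sqrt_pos.mpr (by positivity)
    have hγsq : γ j ^ 2 = ((H j * H j).trace).re / d := by
      rw [hγ j]; exact Real.sq_sqrt (by positivity)
    have hTeq : ((H j * H j).trace).re = γ j ^ 2 * d := by
      rw [hγsq]; field_simp
    rw [hTeq]
    field_simp
    ring
  rw [Finset.sum_congr rfl (fun j _ => hval j), ← Finset.mul_sum]
  ring
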